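/- arXiv:2103.07317 — 5 statements merged into one kernel-verified Lean document; each statement's English description precedes it below -/
import Mathlib

section
/- Let Q : ℝ → ℝ be a continuous T-periodic function. There exists a (positive) T-periodic solution ρ̂ of the logistic ODE dρ̂/dt = ρ̂ (Q(t) − ρ̂) on (0,T) with ρ̂(0) = ρ̂(T) if and only if ∫₀ᵀ Q(t) dt > 0. Moreover in that case the solution is unique and is given explicitly by ρ̂(t) = (1 − exp(−∫₀ᵀ Q(s) ds)) / ( exp(−∫₀ᵀ Q(s) ds) · ∫_t^{t+T} exp(∫_t^s Q(θ) dθ) ds ). -/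
/-!
With `A = ∫₀ᵀ Q` and the integrating factor `g t = exp ∫₀ᵗ Q`, periodicity of `Q` gives
`g (t + T) = e^A g t`. For a nonvanishing solution `ρ` of `ρ' = ρ (Q - ρ)` one has `(g / ρ)' = g`,
so integrating over a period of a `T`-periodic `ρ` yields `ρ t · ∫ₜ^{t+T} g = (e^A - 1) g t`.
The left side is positive, which forces `A > 0` and determines `ρ`; conversely, for `A > 0` the
function `(e^A - 1) g t / ∫ₜ^{t+T} g` is a positive periodic solution.
-/

open Real intervalIntegral

theorem hasDerivAt_intervalIntegral_add_const {E : Type*} [NormedAddCommGroup E]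
    [NormedSpace ℝ E] [CompleteSpace E] {f : ℝ → E} (hf : Continuous f) (T t : ℝ) :
    HasDerivAt (fun t => ∫ s in t..t + T, f s) (f (t + T) - f t) t := by
  have hprim (x : ℝ) : HasDerivAt (fun y => ∫ s in (0:ℝ)..y, f s) (f x) x :=
    integral_hasDerivAt_right (hf.intervalIntegrable 0 x) (hf.stronglyMeasurableAtFilter _ _)
      hf.continuousAt
  have hshift : HasDerivAt (fun y => ∫ s in (0:ℝ)..y + T, f s) (f (t + T)) t :=
    (hprim (t + T)).comp_add_const t T
  refine (hshift.sub (hprim t)).congr_of_eventuallyEq (Filter.Eventually.of_forall fun y => ?_)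
  exact (integral_interval_sub_left (hf.intervalIntegrable _ _) (hf.intervalIntegrable _ _)).symm

namespace PeriodicLogistic

variable {T : ℝ} {Q ρ : ℝ → ℝ}

noncomputable def integratingFactor (Q : ℝ → ℝ) (t : ℝ) : ℝ :=
  exp (∫ θ in (0:ℝ)..t, Q θ)

theorem integratingFactor_pos (t : ℝ) : 0 < integratingFactor Q t :=
  exp_pos _

theorem hasDerivAt_integratingFactor (hQ : Continuous Q) (t : ℝ) :
    HasDerivAt (integratingFactor Q) (Q t * integratingFactor Q t) t := by
  rw [mul_comm]
  exact (integral_hasDerivAt_right (hQ.intervalIntegrable 0 t)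
    (hQ.stronglyMeasurableAtFilter _ _) hQ.continuousAt).exp

theorem continuous_integratingFactor (hQ : Continuous Q) : Continuous (integratingFactor Q) :=
  continuous_iff_continuousAt.2 fun t => (hasDerivAt_integratingFactor hQ t).continuousAt

theorem integratingFactor_add_period (hQ : Continuous Q) (hper : Function.Periodic Q T)
    (t : ℝ) :
    integratingFactor Q (t + T) = exp (∫ s in (0:ℝ)..T, Q s) * integratingFactor Q t := by
  rw [integratingFactor, integratingFactor, ← exp_add, add_comm (∫ s in (0:ℝ)..T, Q s),
    hper.intervalIntegral_add_eq_add 0 t fun a b => hQ.intervalIntegrable a b, zero_add]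

theorem integral_integratingFactor_pos (hT : 0 < T) (hQ : Continuous Q) (t : ℝ) :
    0 < ∫ s in t..t + T, integratingFactor Q s :=
  intervalIntegral_pos_of_pos ((continuous_integratingFactor hQ).intervalIntegrable _ _)
    integratingFactor_pos (by linarith)

theorem integral_exp_integral_eq (hQ : Continuous Q) (t : ℝ) :
    ∫ s in t..t + T, exp (∫ θ in t..s, Q θ) =
      (∫ s in t..t + T, integratingFactor Q s) / integratingFactor Q t := by
  rw [← integral_div]
  refine integral_congr fun s _ => ?_
  rw [integratingFactor, integratingFactor, ← exp_sub,
    integral_interval_sub_left (hQ.intervalIntegrable _ _) (hQ.intervalIntegrable _ _)]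

theorem hasDerivAt_integratingFactor_div (hQ : Continuous Q)
    (hρ : ∀ t, HasDerivAt ρ (ρ t * (Q t - ρ t)) t) {t : ℝ} (hρt : ρ t ≠ 0) :
    HasDerivAt (fun s => integratingFactor Q s / ρ s) (integratingFactor Q t) t := by
  refine ((hasDerivAt_integratingFactor hQ t).div (hρ t) hρt).congr_deriv ?_
  field_simp
  ring

theorem mul_integral_integratingFactor_eq (hQ : Continuous Q) (hper : Function.Periodic Q T)
    (hρ : ∀ t, HasDerivAt ρ (ρ t * (Q t - ρ t)) t) (hρ0 : ∀ t, ρ t ≠ 0)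
    (hρper : Function.Periodic ρ T) (t : ℝ) :
    ρ t * ∫ s in t..t + T, integratingFactor Q s =
      (exp (∫ s in (0:ℝ)..T, Q s) - 1) * integratingFactor Q t := by
  rw [integral_eq_sub_of_hasDerivAt (fun s _ => hasDerivAt_integratingFactor_div hQ hρ (hρ0 s))
    ((continuous_integratingFactor hQ).intervalIntegrable _ _),
    integratingFactor_add_period hQ hper, hρper t]
  field_simp [hρ0 t]

theorem integral_pos_of_periodic_solution (hT : 0 < T) (hQ : Continuous Q)
    (hper : Function.Periodic Q T) (hρ : ∀ t, HasDerivAt ρ (ρ t * (Q t - ρ t)) t)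
    (hpos : ∀ t, 0 < ρ t) (hρper : Function.Periodic ρ T) : 0 < ∫ s in (0:ℝ)..T, Q s := by
  have hlhs := mul_pos (hpos 0) (integral_integratingFactor_pos hT hQ 0)
  rw [mul_integral_integratingFactor_eq hQ hper hρ (fun t => (hpos t).ne') hρper 0] at hlhs
  exact one_lt_exp_iff.1 (sub_pos.1 (pos_of_mul_pos_left hlhs (integratingFactor_pos 0).le))

noncomputable def solution (T : ℝ) (Q : ℝ → ℝ) (t : ℝ) : ℝ :=
  (exp (∫ s in (0:ℝ)..T, Q s) - 1) * integratingFactor Q t /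
    ∫ s in t..t + T, integratingFactor Q s

theorem solution_pos (hT : 0 < T) (hQ : Continuous Q) (hA : 0 < ∫ s in (0:ℝ)..T, Q s)
    (t : ℝ) : 0 < solution T Q t := by
  have hexp : 0 < exp (∫ s in (0:ℝ)..T, Q s) - 1 := sub_pos.2 (one_lt_exp_iff.2 hA)
  exact div_pos (mul_pos hexp (integratingFactor_pos t))
    (integral_integratingFactor_pos hT hQ t)

theorem solution_periodic (hT : 0 < T) (hQ : Continuous Q) (hper : Function.Periodic Q T) :
    Function.Periodic (solution T Q) T := by
  intro t
  have hG := (integral_integratingFactor_pos hT hQ t).ne'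
  have hshift : ∫ s in t + T..t + T + T, integratingFactor Q s =
      exp (∫ s in (0:ℝ)..T, Q s) * ∫ s in t..t + T, integratingFactor Q s := by
    rw [← integral_const_mul, ← integral_comp_add_right]
    exact integral_congr fun s _ => integratingFactor_add_period hQ hper s
  unfold solution
  rw [hshift, integratingFactor_add_period hQ hper]
  field_simp

theorem hasDerivAt_solution (hT : 0 < T) (hQ : Continuous Q) (hper : Function.Periodic Q T)
    (t : ℝ) : HasDerivAt (solution T Q) (solution T Q t * (Q t - solution T Q t)) t := by
  have hG := (integral_integratingFactor_pos hT hQ t).ne'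
  have hd := ((hasDerivAt_integratingFactor hQ t).const_mul
    (exp (∫ s in (0:ℝ)..T, Q s) - 1)).div
    (hasDerivAt_intervalIntegral_add_const (continuous_integratingFactor hQ) T t) hG
  refine hd.congr_deriv ?_
  unfold solution
  rw [integratingFactor_add_period hQ hper]
  field_simp

theorem eq_solution (hT : 0 < T) (hQ : Continuous Q) (hper : Function.Periodic Q T)
    (hρ : ∀ t, HasDerivAt ρ (ρ t * (Q t - ρ t)) t) (hρ0 : ∀ t, ρ t ≠ 0)
    (hρper : Function.Periodic ρ T) (t : ℝ) : ρ t = solution T Q t := by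
  rw [solution, ← mul_integral_integratingFactor_eq hQ hper hρ hρ0 hρper,
    mul_div_cancel_right₀ _ (integral_integratingFactor_pos hT hQ t).ne']

theorem solution_eq_exp_neg (hQ : Continuous Q) (t : ℝ) :
    solution T Q t =
      (1 - exp (-∫ s in (0:ℝ)..T, Q s)) /
        (exp (-∫ s in (0:ℝ)..T, Q s) * ∫ s in t..t + T, exp (∫ θ in t..s, Q θ)) := by
  have hg := (integratingFactor_pos (Q := Q) t).ne'
  rw [solution, integral_exp_integral_eq hQ, exp_neg]
  field_simp

end PeriodicLogistic

open PeriodicLogistic in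
/-- Existence and uniqueness, with explicit formula, of a positive `T`-periodic solution of
the non-autonomous logistic equation `ρ' = ρ(Q(t) − ρ)`. -/
theorem periodic_logistic_existence_uniqueness
    (T : ℝ) (hT : 0 < T) (Q : ℝ → ℝ) (hQc : Continuous Q)
    (hQper : ∀ t, Q (t + T) = Q t) :
    ((∃ ρ : ℝ → ℝ, (∀ t, 0 < ρ t) ∧ ρ 0 = ρ T ∧ (∀ t, ρ (t + T) = ρ t) ∧
        (∀ t, HasDerivAt ρ (ρ t * (Q t - ρ t)) t)) ↔
      0 < ∫ t in (0:ℝ)..T, Q t) ∧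
    (∀ ρ : ℝ → ℝ, (∀ t, 0 < ρ t) → ρ 0 = ρ T → (∀ t, ρ (t + T) = ρ t) →
      (∀ t, HasDerivAt ρ (ρ t * (Q t - ρ t)) t) →
      ∀ t, ρ t =
        (1 - Real.exp (-∫ s in (0:ℝ)..T, Q s)) /
          (Real.exp (-∫ s in (0:ℝ)..T, Q s) *
            ∫ s in t..(t + T), Real.exp (∫ θ in t..s, Q θ))) := by
  refine ⟨⟨fun ⟨ρ, hpos, _, hρper, hρ⟩ => ?_, fun hA => ?_⟩,
    fun ρ hpos _ hρper hρ t => ?_⟩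
  · exact integral_pos_of_periodic_solution hT hQc hQper hρ hpos hρper
  · have hsper := solution_periodic hT hQc hQper
    refine ⟨solution T Q, solution_pos hT hQc hA, by simpa using (hsper 0).symm, hsper,
      hasDerivAt_solution hT hQc hQper⟩
  · rw [eq_solution hT hQc hQper hρ (fun t => (hpos t).ne') hρper t, solution_eq_exp_neg hQc]
end

section
/- Fix T > 0 and d₀ > 0. Suppose Q : ℝ → ℝ is continuous, T-periodic, satisfies |Q(t)| ≤ d₀ for all t, and λ_m := (1/T)∫₀ᵀ Q(t) dt > 0. Then the T-periodic solution ρ̂(t) = (1 − e^{−Tλ_m}) / ( e^{−Tλ_m} ∫_t^{t+T} exp(∫_t^s Q(θ)dθ) ds ) satisfies ρ̂(t) ≥ (1/T) e^{−d₀ T} (e^{λ_m T} − 1) > 0 for all t ≥ 0. -/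
open Real intervalIntegral

/-- Explicit positive lower bound for the periodic solution of the non-autonomous
logistic equation. -/
theorem periodic_logistic_lower_bound
    (T d₀ : ℝ) (hT : 0 < T) (hd₀ : 0 < d₀)
    (Q : ℝ → ℝ) (hQc : Continuous Q) (hQper : ∀ t, Q (t + T) = Q t)
    (hQbd : ∀ t, |Q t| ≤ d₀)
    (lam : ℝ) (hlam : lam = (1 / T) * ∫ t in (0:ℝ)..T, Q t) (hlampos : 0 < lam) :
    ∀ t, 0 ≤ t →
      (1 / T) * Real.exp (-d₀ * T) * (Real.exp (lam * T) - 1) ≤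
        (1 - Real.exp (-T * lam)) /
          (Real.exp (-T * lam) * ∫ s in t..(t + T), Real.exp (∫ θ in t..s, Q θ)) ∧
      0 < (1 / T) * Real.exp (-d₀ * T) * (Real.exp (lam * T) - 1) := by
  intro t ht
  have hexp1 : 1 < Real.exp (lam * T) := by
    rw [show (1:ℝ) = Real.exp 0 from (Real.exp_zero).symm]
    exact Real.exp_lt_exp.mpr (by positivity)
  have hpos : 0 < (1 / T) * Real.exp (-d₀ * T) * (Real.exp (lam * T) - 1) := by
    have := sub_pos.mpr hexp1
    positivity
  refine ⟨?_, hpos⟩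
  -- continuity of the primitive
  have hcontF : Continuous fun s => ∫ θ in t..s, Q θ :=
    intervalIntegral.continuous_primitive (fun a b => hQc.intervalIntegrable a b) t
  have hcont : Continuous fun s => Real.exp (∫ θ in t..s, Q θ) :=
    Real.continuous_exp.comp hcontF
  set I := ∫ s in t..(t + T), Real.exp (∫ θ in t..s, Q θ) with hI
  have htT : t ≤ t + T := by linarith
  -- positivity of I
  have hIpos : 0 < I := by
    apply intervalIntegral.intervalIntegral_pos_of_pos_on
      (hcont.intervalIntegrable t (t + T))
      (fun x _ => Real.exp_pos _) (by linarith)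
  -- upper bound on I
  have hIle : I ≤ T * Real.exp (d₀ * T) := by
    have hbound : ∀ s ∈ Set.Icc t (t + T),
        Real.exp (∫ θ in t..s, Q θ) ≤ Real.exp (d₀ * T) := by
      intro s hs
      apply Real.exp_le_exp.mpr
      have h1 : (∫ θ in t..s, Q θ) ≤ ∫ θ in t..s, d₀ := by
        apply intervalIntegral.integral_mono_on hs.1
          (hQc.intervalIntegrable t s) (intervalIntegrable_const)
        intro x _
        exact (abs_le.mp (hQbd x)).2
      have h2 : (∫ θ in t..s, d₀) = d₀ * (s - t) := by
        simp [mul_comm]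
      have h3 : d₀ * (s - t) ≤ d₀ * T := by
        have := hs.2
        nlinarith
      linarith
    calc I ≤ ∫ s in t..(t + T), Real.exp (d₀ * T) := by
          apply intervalIntegral.integral_mono_on htT
            (hcont.intervalIntegrable t (t + T)) intervalIntegrable_const hbound
      _ = T * Real.exp (d₀ * T) := by simp [mul_comm]
  -- key comparison
  have hnum : 0 < 1 - Real.exp (-T * lam) := by
    have : Real.exp (-T * lam) < 1 := by
      rw [show (1:ℝ) = Real.exp 0 from (Real.exp_zero).symm]
      exact Real.exp_lt_exp.mpr (by nlinarith)
    linarith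
  have hden : 0 < Real.exp (-T * lam) * I := by positivity
  have hdenle : Real.exp (-T * lam) * I ≤ Real.exp (-T * lam) * (T * Real.exp (d₀ * T)) :=
    mul_le_mul_of_nonneg_left hIle (Real.exp_pos _).le
  have step : (1 - Real.exp (-T * lam)) / (Real.exp (-T * lam) * (T * Real.exp (d₀ * T))) ≤
      (1 - Real.exp (-T * lam)) / (Real.exp (-T * lam) * I) :=
    div_le_div_of_nonneg_left hnum.le hden hdenle
  refine le_trans (le_of_eq ?_) step
  have e1 : Real.exp (-T * lam) = (Real.exp (lam * T))⁻¹ := by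
    rw [← Real.exp_neg]; ring_nf
  have e2 : Real.exp (-d₀ * T) = (Real.exp (d₀ * T))⁻¹ := by
    rw [← Real.exp_neg]; ring_nf
  rw [e1, e2]
  have h1 := (Real.exp_pos (lam * T)).ne'
  have h2 := (Real.exp_pos (d₀ * T)).ne'
  field_simp
end

section
/- Let ā : ℝ → ℝ be C³, attain its maximum at a unique point x_m with ā''(x_m) < 0. Define ψ_x(x) := −c/2 + sqrt(ā(x_m) − ā(x)) for x < x_m, ψ_x(x_m) := −c/2, and ψ_x(x) := −c/2 − sqrt(ā(x_m) − ā(x)) for x > x_m. Then ψ_x is differentiable at x_m with derivative −sqrt(−ā''(x_m)/2); that is, lim_{x→x_m} (ψ_x(x) − ψ_x(x_m))/(x − x_m) = −sqrt(−ā''(x_m)/2). -/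
open Real Topology Filter

/-! At a critical point `a`, L'Hôpital's rule gives
`(f a - f x) / (x - a)² → -f''(a) / 2`. Hence `√(f a - f x) / |x - a| → √(-f''(a) / 2)`,
and the sign change of `ψ_x` across `a` exactly compensates the sign of `x - a`. -/

theorem tendsto_sub_div_sq_of_deriv_eq_zero {f : ℝ → ℝ} {a f'' : ℝ}
    (hf : ∀ᶠ x in 𝓝 a, DifferentiableAt ℝ f x) (hf'' : HasDerivAt (deriv f) f'' a)
    (hcrit : deriv f a = 0) :
    Tendsto (fun x => (f a - f x) / (x - a) ^ 2) (𝓝[≠] a) (𝓝 (-f'' / 2)) := by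
  have hslope : Tendsto (fun x => deriv f x / (x - a)) (𝓝[≠] a) (𝓝 f'') := by
    refine (hasDerivAt_iff_tendsto_slope.mp hf'').congr fun x => ?_
    rw [slope_def_field, hcrit, sub_zero]
  refine HasDerivAt.lhopital_zero_nhdsNE (f' := fun x => -deriv f x)
    (g' := fun x => 2 * (x - a)) ?_ ?_ ?_ ?_ ?_ ?_
  · filter_upwards [nhdsWithin_le_nhds hf] with x hx using hx.hasDerivAt.const_sub _
  · refine Eventually.of_forall fun x => ?_
    simpa using ((hasDerivAt_id x).sub_const a).fun_pow 2
  · filter_upwards [self_mem_nhdsWithin] with x hx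
    simpa [sub_eq_zero] using hx
  · simpa using tendsto_nhdsWithin_of_tendsto_nhds
      (hf.self_of_nhds.continuousAt.tendsto.const_sub (f a))
  · simpa using tendsto_nhdsWithin_of_tendsto_nhds
      ((by fun_prop : Continuous fun x : ℝ => (x - a) ^ 2).tendsto a)
  · exact (hslope.neg.div_const 2).congr fun x => by rw [neg_div, neg_div, div_div, mul_comm]

theorem neg_sqrt_div_sq_eq (d : ℝ) {x a : ℝ} (hx : x ≠ a) :
    -√(d / (x - a) ^ 2) = (if x < a then √d else -√d) / (x - a) := by
  rw [sqrt_div' _ (sq_nonneg _), sqrt_sq_eq_abs]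
  split_ifs with h
  · rw [abs_of_neg (sub_neg.2 h), div_neg, neg_neg]
  · rw [abs_of_pos (sub_pos.2 (lt_of_le_of_ne (not_lt.1 h) hx.symm)), neg_div]

theorem psi_x_differentiable_at_max_general
    (c : ℝ) (abar : ℝ → ℝ) (xm : ℝ)
    (hreg : ContDiff ℝ 3 abar)
    (hmax : ∀ x, x ≠ xm → abar x < abar xm) :
    Filter.Tendsto
      (fun x =>
        ((if x < xm then -c / 2 + Real.sqrt (abar xm - abar x)
          else if x = xm then -c / 2
          else -c / 2 - Real.sqrt (abar xm - abar x)) - (-c / 2)) / (x - xm))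
      (𝓝[≠] xm)
      (𝓝 (-Real.sqrt (-(deriv (deriv abar) xm) / 2))) := by
  have hmaxAt : IsLocalMax abar xm := Eventually.of_forall fun x => by
    rcases eq_or_ne x xm with rfl | hx
    exacts [le_rfl, (hmax x hx).le]
  have hd2 : HasDerivAt (deriv abar) (deriv (deriv abar) xm) xm :=
    ((hreg.deriv' (n := 2)).differentiable (by norm_num) xm).hasDerivAt
  have hquot := tendsto_sub_div_sq_of_deriv_eq_zero
    (Eventually.of_forall (hreg.differentiable (by norm_num))) hd2 hmaxAt.deriv_eq_zero
  refine ((continuous_sqrt.tendsto _).comp hquot).neg.congr' ?_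
  filter_upwards [self_mem_nhdsWithin] with x (hx : x ≠ xm)
  rw [Function.comp_apply, neg_sqrt_div_sq_eq _ hx, if_neg hx]
  split_ifs <;> ring

/-- Lemma `Diff_psi`: the piecewise derivative `ψ_x` of the explicit solution of the limiting
Hamilton–Jacobi equation is differentiable at the maximum point `x_m` of `ā`, with derivative
`−√(−ā''(x_m)/2)`. -/
theorem psi_x_differentiable_at_max
    (c : ℝ) (abar : ℝ → ℝ) (xm : ℝ)
    (hreg : ContDiff ℝ 3 abar)
    (hmax : ∀ x, x ≠ xm → abar x < abar xm)
    (hconc : deriv (deriv abar) xm < 0) :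
    Filter.Tendsto
      (fun x =>
        ((if x < xm then -c / 2 + Real.sqrt (abar xm - abar x)
          else if x = xm then -c / 2
          else -c / 2 - Real.sqrt (abar xm - abar x)) - (-c / 2)) / (x - xm))
      (𝓝[≠] xm)
      (𝓝 (-Real.sqrt (-(deriv (deriv abar) xm) / 2))) :=
  psi_x_differentiable_at_max_general c abar xm hreg hmax
end

section
/- Let f : ℝ → ℝ be C³ near x_m with f(x_m) = 0, f'(x_m) = 0, f''(x_m) = 2A with A > 0, and f'''(x_m) = 6B, and f(x) > 0 for x ≠ x_m near x_m. Then lim_{x → x_m^−} ( −f'(x) − 2√A √(f(x)) ) / (4 f(x)) = −B/(2A) and lim_{x → x_m^+} ( −f'(x) + 2√A √(f(x)) ) / (4 f(x)) = −B/(2A). -/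
/-! Write `t = x - x_m`. L'Hôpital's rule gives `f / t² → A`, and, since
`(f'² - 4 A f)' = 2 f' (f'' - 2A)` with `f' / t → 2A` and `(f'' - 2A) / t → 6B`, also
`(f'² - 4 A f) / t³ → 8AB`. On both sides the numerator is `R = -f' + 2√A · sign t · √f`, whose
conjugate `Q = -f' - 2√A · sign t · √f` satisfies `Q / t → -4A` because `sign t · √f / t → √A`.
As `R Q = f'² - 4 A f`, we get `R / (4f) = (R Q / t³) / (4 (f / t²) (Q / t)) → 8AB / (-16A²)`. -/

open Real Topology Filter

section

variable {𝕜 F : Type*} [NontriviallyNormedField 𝕜] [NormedAddCommGroup F] [NormedSpace 𝕜 F]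

theorem ContDiffAt.iteratedDeriv_right {f : 𝕜 → F} {a : 𝕜} {m : WithTop ℕ∞} (k : ℕ)
    (hf : ContDiffAt 𝕜 (m + k) f a) : ContDiffAt 𝕜 m (iteratedDeriv k f) a := by
  induction k generalizing f with
  | zero => simpa using hf
  | succ k ih =>
    rw [iteratedDeriv_succ']
    exact ih (hf.derivWithin (by push_cast; rw [add_assoc]))

theorem ContDiffAt.eventually_hasDerivAt_iteratedDeriv {f : 𝕜 → F} {a : 𝕜} (k : ℕ)
    (hf : ContDiffAt 𝕜 (k + 1) f a) :
    ∀ᶠ x in 𝓝 a, HasDerivAt (iteratedDeriv k f) (iteratedDeriv (k + 1) f x) x := by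
  filter_upwards [hf.eventually (by simp)] with x hx
  rw [iteratedDeriv_succ]
  refine ((ContDiffAt.iteratedDeriv_right k ?_).differentiableAt one_ne_zero).hasDerivAt
  simpa [add_comm] using hx

end

theorem HasDerivAt.tendsto_sub_div_sub {g : ℝ → ℝ} {a c : ℝ} (hg : HasDerivAt g c a) :
    Tendsto (fun x => (g x - g a) / (x - a)) (𝓝[≠] a) (𝓝 c) :=
  (hasDerivAt_iff_tendsto_slope.mp hg).congr fun x => by rw [slope_def_field]

theorem tendsto_div_pow_succ_of_hasDerivAt {u u' : ℝ → ℝ} {a : ℝ} {l : Filter ℝ} (n : ℕ)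
    (hu : ∀ᶠ x in 𝓝 a, HasDerivAt u (u' x) x) (hua : u a = 0)
    (hlim : Tendsto (fun x => u' x / ((n + 1) * (x - a) ^ n)) (𝓝[≠] a) l) :
    Tendsto (fun x => u x / (x - a) ^ (n + 1)) (𝓝[≠] a) l := by
  have hpow : ∀ x, HasDerivAt (fun x => (x - a) ^ (n + 1)) ((n + 1) * (x - a) ^ n) x := fun x => by
    simpa using ((hasDerivAt_id x).sub_const a).fun_pow (n + 1)
  have hu0 : Tendsto u (𝓝[≠] a) (𝓝 0) :=
    hua ▸ hu.self_of_nhds.continuousAt.tendsto.mono_left nhdsWithin_le_nhds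
  have hpow0 : Tendsto (fun x => (x - a) ^ (n + 1)) (𝓝[≠] a) (𝓝 0) := by
    simpa using (hpow a).continuousAt.tendsto.mono_left nhdsWithin_le_nhds
  refine HasDerivAt.lhopital_zero_nhdsNE (eventually_nhdsWithin_of_eventually_nhds hu)
    (.of_forall hpow) ?_ hu0 hpow0 hlim
  filter_upwards [self_mem_nhdsWithin] with x hx
  exact mul_ne_zero (by positivity) (pow_ne_zero _ (sub_ne_zero.2 hx))

theorem tendsto_div_sq_of_hasDerivAt {f f' : ℝ → ℝ} {a c : ℝ}
    (hf : ∀ᶠ x in 𝓝 a, HasDerivAt f (f' x) x) (hf' : HasDerivAt f' c a)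
    (hfa : f a = 0) (hf'a : f' a = 0) :
    Tendsto (fun x => f x / (x - a) ^ 2) (𝓝[≠] a) (𝓝 (c / 2)) := by
  refine tendsto_div_pow_succ_of_hasDerivAt 1 hf hfa
    ((hf'.tendsto_sub_div_sub.div_const 2).congr fun x => ?_)
  rw [hf'a, sub_zero, div_div]; norm_num [mul_comm]

theorem tendsto_sq_deriv_sub_mul_div_cube {f f' f'' : ℝ → ℝ} {a d : ℝ}
    (hf : ∀ᶠ x in 𝓝 a, HasDerivAt f (f' x) x) (hf' : ∀ᶠ x in 𝓝 a, HasDerivAt f' (f'' x) x)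
    (hf'' : HasDerivAt f'' d a) (hfa : f a = 0) (hf'a : f' a = 0) :
    Tendsto (fun x => (f' x ^ 2 - 2 * f'' a * f x) / (x - a) ^ 3) (𝓝[≠] a)
      (𝓝 (2 / 3 * f'' a * d)) := by
  have hN : ∀ᶠ x in 𝓝 a, HasDerivAt (fun x => f' x ^ 2 - 2 * f'' a * f x)
      (2 * f' x * (f'' x - f'' a)) x := by
    filter_upwards [hf, hf'] with x hfx hf'x
    refine ((hf'x.fun_pow 2).fun_sub (hfx.const_mul (2 * f'' a))).congr_deriv ?_
    push_cast; ring
  refine tendsto_div_pow_succ_of_hasDerivAt 2 hN (by simp [hfa, hf'a]) ?_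
  have hlim := (hf'.self_of_nhds.tendsto_sub_div_sub.mul hf''.tendsto_sub_div_sub).const_mul (2 / 3)
  refine (mul_assoc (2 / 3 : ℝ) (f'' a) d ▸ hlim).congr' ?_
  filter_upwards [self_mem_nhdsWithin] with x hx
  have ht : x - a ≠ 0 := sub_ne_zero.2 hx
  rw [hf'a]; push_cast; field_simp; ring

theorem tendsto_div_of_mul_eq {R Q N g : ℝ → ℝ} {a n p q : ℝ} (hp : p ≠ 0) (hq : q ≠ 0)
    (hRQ : ∀ᶠ x in 𝓝[≠] a, R x * Q x = N x)
    (hN : Tendsto (fun x => N x / (x - a) ^ 3) (𝓝[≠] a) (𝓝 n))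
    (hg : Tendsto (fun x => g x / (x - a) ^ 2) (𝓝[≠] a) (𝓝 p))
    (hQ : Tendsto (fun x => Q x / (x - a)) (𝓝[≠] a) (𝓝 q)) :
    Tendsto (fun x => R x / g x) (𝓝[≠] a) (𝓝 (n / (p * q))) := by
  refine (hN.div (hg.mul hQ) (mul_ne_zero hp hq)).congr' ?_
  filter_upwards [self_mem_nhdsWithin, hRQ, hg.eventually_ne hp, hQ.eventually_ne hq]
    with x hx hRQx hgx hQx
  have ht : x - a ≠ 0 := sub_ne_zero.2 hx
  have hg0 : g x ≠ 0 := fun h => hgx (by simp [h])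
  have hQ0 : Q x ≠ 0 := fun h => hQx (by simp [h])
  simp only [Pi.div_apply]
  rw [← hRQx]; field_simp

theorem tendsto_corrector_quotient {f f' : ℝ → ℝ} {a A B : ℝ} (hA : 0 < A)
    (hf' : Tendsto (fun x => f' x / (x - a)) (𝓝[≠] a) (𝓝 (2 * A)))
    (hf : Tendsto (fun x => f x / (x - a) ^ 2) (𝓝[≠] a) (𝓝 A))
    (hN : Tendsto (fun x => (f' x ^ 2 - 4 * A * f x) / (x - a) ^ 3) (𝓝[≠] a) (𝓝 (8 * A * B))) :
    Tendsto (fun x => (-f' x + 2 * √A * (Real.sign (x - a) * √(f x))) / (4 * f x)) (𝓝[≠] a)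
      (𝓝 (-B / (2 * A))) := by
  have hfpos : ∀ᶠ x in 𝓝[≠] a, 0 < f x := by
    filter_upwards [self_mem_nhdsWithin, hf.eventually (lt_mem_nhds hA)] with x hx hfx
    have ht : 0 < (x - a) ^ 2 := by positivity [sub_ne_zero.2 hx]
    simpa [ht] using mul_pos hfx ht
  have hroot : Tendsto (fun x => Real.sign (x - a) * √(f x) / (x - a)) (𝓝[≠] a) (𝓝 √A) := by
    refine ((continuous_sqrt.tendsto A).comp hf).congr' ?_
    filter_upwards [self_mem_nhdsWithin] with x hx
    rw [Function.comp_apply, sqrt_div' _ (sq_nonneg _), sqrt_sq_eq_abs]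
    rcases lt_or_gt_of_ne (sub_ne_zero.2 hx) with ht | ht
    · rw [Real.sign_of_neg ht, abs_of_neg ht, div_neg, neg_one_mul, neg_div]
    · rw [Real.sign_of_pos ht, abs_of_pos ht, one_mul]
  have hQ : Tendsto (fun x => (-f' x - 2 * √A * (Real.sign (x - a) * √(f x))) / (x - a))
      (𝓝[≠] a) (𝓝 (-(4 * A))) := by
    have h := hf'.neg.sub (hroot.const_mul (2 * √A))
    rw [mul_assoc, mul_self_sqrt hA.le, show -(2 * A) - 2 * A = -(4 * A) by ring] at h
    exact h.congr fun x => by ring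
  have hRQ : ∀ᶠ x in 𝓝[≠] a, (-f' x + 2 * √A * (Real.sign (x - a) * √(f x))) *
      (-f' x - 2 * √A * (Real.sign (x - a) * √(f x))) = f' x ^ 2 - 4 * A * f x := by
    filter_upwards [self_mem_nhdsWithin, hfpos] with x hx hfx
    have hsign : Real.sign (x - a) ^ 2 = 1 := by
      rcases Real.sign_apply_eq_of_ne_zero _ (sub_ne_zero.2 hx) with h | h <;> rw [h] <;> norm_num
    linear_combination (-4 * √A ^ 2 * Real.sign (x - a) ^ 2) * sq_sqrt hfx.le +
      (-4 * √A ^ 2 * f x) * hsign + (-4 * f x) * sq_sqrt hA.le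
  have h4f : Tendsto (fun x => 4 * f x / (x - a) ^ 2) (𝓝[≠] a) (𝓝 (4 * A)) :=
    (hf.const_mul 4).congr fun x => (mul_div_assoc _ _ _).symm
  convert tendsto_div_of_mul_eq (by positivity) (by linarith) hRQ hN h4f hQ using 2
  field_simp
  ring

theorem corrector_first_derivative_limits_general
    (f : ℝ → ℝ) (xm A B : ℝ)
    (hreg : ContDiffAt ℝ 3 f xm)
    (hf0 : f xm = 0)
    (hf1 : deriv f xm = 0)
    (hf2 : iteratedDeriv 2 f xm = 2 * A) (hA : 0 < A)
    (hf3 : iteratedDeriv 3 f xm = 6 * B) :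
    Filter.Tendsto
        (fun x => (-(deriv f x) - 2 * Real.sqrt A * Real.sqrt (f x)) / (4 * f x))
        (𝓝[<] xm) (𝓝 (-B / (2 * A))) ∧
      Filter.Tendsto
        (fun x => (-(deriv f x) + 2 * Real.sqrt A * Real.sqrt (f x)) / (4 * f x))
        (𝓝[>] xm) (𝓝 (-B / (2 * A))) := by
  have hf : ∀ᶠ x in 𝓝 xm, HasDerivAt f (deriv f x) x := by
    simpa using (hreg.of_le (by norm_num)).eventually_hasDerivAt_iteratedDeriv 0
  have hf' : ∀ᶠ x in 𝓝 xm, HasDerivAt (deriv f) (iteratedDeriv 2 f x) x := by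
    simpa using (hreg.of_le (by norm_num)).eventually_hasDerivAt_iteratedDeriv 1
  have hf'' : HasDerivAt (iteratedDeriv 2 f) (6 * B) xm :=
    hf3 ▸ (hreg.eventually_hasDerivAt_iteratedDeriv 2).self_of_nhds
  have hf'_div : Tendsto (fun x => deriv f x / (x - xm)) (𝓝[≠] xm) (𝓝 (2 * A)) := by
    simpa [hf1, hf2] using hf'.self_of_nhds.tendsto_sub_div_sub
  have hf_div : Tendsto (fun x => f x / (x - xm) ^ 2) (𝓝[≠] xm) (𝓝 A) := by
    simpa [hf2] using tendsto_div_sq_of_hasDerivAt hf hf'.self_of_nhds hf0 hf1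
  have hN : Tendsto (fun x => (deriv f x ^ 2 - 4 * A * f x) / (x - xm) ^ 3) (𝓝[≠] xm)
      (𝓝 (8 * A * B)) := by
    convert tendsto_sq_deriv_sub_mul_div_cube hf hf' hf'' hf0 hf1 using 2 <;> rw [hf2] <;> ring
  have hlim := tendsto_corrector_quotient hA hf'_div hf_div hN
  constructor
  · refine (hlim.mono_left (nhdsLT_le_nhdsNE xm)).congr' ?_
    filter_upwards [self_mem_nhdsWithin] with x hx
    rw [Real.sign_of_neg (sub_neg.2 hx)]
    ring
  · refine (hlim.mono_left (nhdsGT_le_nhdsNE xm)).congr' ?_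
    filter_upwards [self_mem_nhdsWithin] with x hx
    rw [Real.sign_of_pos (sub_pos.2 hx)]
    ring

/-- Key one-sided limits in the proof of boundedness of the corrector's derivative near the
maximum point `x_m`. -/
theorem corrector_first_derivative_limits
    (f : ℝ → ℝ) (xm A B : ℝ)
    (hreg : ContDiffAt ℝ 3 f xm)
    (hf0 : f xm = 0)
    (hf1 : deriv f xm = 0)
    (hf2 : iteratedDeriv 2 f xm = 2 * A) (hA : 0 < A)
    (hf3 : iteratedDeriv 3 f xm = 6 * B)
    (hfpos : ∀ᶠ x in 𝓝[≠] xm, 0 < f x) :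
    Filter.Tendsto
        (fun x => (-(deriv f x) - 2 * Real.sqrt A * Real.sqrt (f x)) / (4 * f x))
        (𝓝[<] xm) (𝓝 (-B / (2 * A))) ∧
      Filter.Tendsto
        (fun x => (-(deriv f x) + 2 * Real.sqrt A * Real.sqrt (f x)) / (4 * f x))
        (𝓝[>] xm) (𝓝 (-B / (2 * A))) :=
  corrector_first_derivative_limits_general f xm A B hreg hf0 hf1 hf2 hA hf3
end

section
/- Let ψ be C² with ψ(x) = −(√ḡ/2)(x − x̄)² (quadratic case), and consider the corrector system ∂_t φ(t,x) = a(t,x) − ā(x) (for 0 ≤ t ≤ 1, with a(t,x) = r − g(t)(x − θ(t))² and ā its time average), with the constraint ∫₀¹ ∂_x φ(t,x) dt = ( −ψ''(x) + ψ''(x_m) ) / ( 2ψ'(x) + c ) = 0. Then ∂_x φ(t, x̄) = D(t), where D(t) = −c√(ḡ)(t − 1/2) + 2∫₀¹∫₀^τ g(s)(x̄ − θ(s)) ds dτ − 2∫₀^t g(s)(x̄ − θ(s)) ds, and D satisfies D(0) = D(1) and ∫₀¹ D(t) dt = 0. -/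
open Real intervalIntegral

/-- Explicit computation of the corrector's spatial derivative at the concentration point
`x̄` in the quadratic example: it equals the periodic, zero-mean function `D(t)`. -/
theorem corrector_derivative_quadratic
    (r c : ℝ) (g θ : ℝ → ℝ)
    (hg : Continuous g) (hθ : Continuous θ)
    (hgpos : ∀ t ∈ Set.Icc (0:ℝ) 1, 0 < g t)
    (gbar g₁ xm xb : ℝ)
    (hgbar : gbar = ∫ t in (0:ℝ)..1, g t)
    (hg₁ : g₁ = ∫ t in (0:ℝ)..1, g t * θ t)
    (hxm : xm = g₁ / gbar)
    (hxb : xb = xm - c / (2 * Real.sqrt gbar))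
    (φ : ℝ → ℝ → ℝ)
    (hφsmooth : ContDiff ℝ (⊤ : ℕ∞) (fun p : ℝ × ℝ => φ p.1 p.2))
    (hφt : ∀ t x, HasDerivAt (fun s => φ s x)
        ((r - g t * (x - θ t) ^ 2) - ∫ s in (0:ℝ)..1, (r - g s * (x - θ s) ^ 2)) t)
    (hconstraint : ∀ x : ℝ, (∫ t in (0:ℝ)..1, deriv (fun y => φ t y) x) = 0)
    (D : ℝ → ℝ)
    (hD : ∀ t, D t = -c * Real.sqrt gbar * (t - 1 / 2)
        + 2 * (∫ τ in (0:ℝ)..1, ∫ s in (0:ℝ)..τ, g s * (xb - θ s))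
        - 2 * ∫ s in (0:ℝ)..t, g s * (xb - θ s)) :
    (∀ t ∈ Set.Icc (0:ℝ) 1, deriv (fun y => φ t y) xb = D t) ∧
    D 0 = D 1 ∧
    (∫ t in (0:ℝ)..1, D t) = 0 := by
  -- basic continuity facts
  have cgθ : Continuous fun s => g s * θ s := hg.mul hθ
  have cgθ2 : Continuous fun s => g s * θ s ^ 2 := hg.mul (hθ.pow 2)
  have cG : Continuous fun s => g s * (xb - θ s) := hg.mul (continuous_const.sub hθ)
  have hprim : Continuous fun t => ∫ s in (0:ℝ)..t, g s * (xb - θ s) :=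
    intervalIntegral.continuous_primitive (fun a b => cG.intervalIntegrable a b) 0
  -- positivity of gbar
  have hgbar_pos : 0 < gbar := by
    rw [hgbar]
    apply intervalIntegral.intervalIntegral_pos_of_pos_on (hg.intervalIntegrable 0 1)
    · intro x hx
      exact hgpos x ⟨hx.1.le, hx.2.le⟩
    · norm_num
  have hsq : Real.sqrt gbar * Real.sqrt gbar = gbar := Real.mul_self_sqrt hgbar_pos.le
  have hsqpos : 0 < Real.sqrt gbar := Real.sqrt_pos.mpr hgbar_pos
  -- linearity of the integral defining G
  have hGlin : ∀ t : ℝ, (∫ s in (0:ℝ)..t, g s * (xb - θ s))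
      = xb * (∫ s in (0:ℝ)..t, g s) - ∫ s in (0:ℝ)..t, g s * θ s := by
    intro t
    rw [intervalIntegral.integral_congr (g := fun s => xb * g s - g s * θ s)
      (fun s _ => by ring)]
    rw [intervalIntegral.integral_sub (f := fun s => xb * g s) (g := fun s => g s * θ s)
      ((continuous_const.mul hg : Continuous fun s => xb * g s).intervalIntegrable 0 t)
      (cgθ.intervalIntegrable 0 t), intervalIntegral.integral_const_mul]
  -- expansion of the time integral of a(·,x) as a polynomial in x
  have hA : ∀ t x : ℝ, (∫ s in (0:ℝ)..t, (r - g s * (x - θ s) ^ 2))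
      = r * t - x ^ 2 * (∫ s in (0:ℝ)..t, g s) + 2 * x * (∫ s in (0:ℝ)..t, g s * θ s)
        - ∫ s in (0:ℝ)..t, g s * θ s ^ 2 := by
    intro t x
    rw [intervalIntegral.integral_congr
      (g := fun s => (r : ℝ) - x ^ 2 * g s + (2 * x) * (g s * θ s) - g s * θ s ^ 2)
      (fun s _ => by ring)]
    rw [intervalIntegral.integral_sub
        (f := fun s => (r : ℝ) - x ^ 2 * g s + (2 * x) * (g s * θ s)) (g := fun s => g s * θ s ^ 2)
        (((continuous_const.sub (continuous_const.mul hg)).add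
          (continuous_const.mul cgθ) : Continuous fun s =>
            (r : ℝ) - x ^ 2 * g s + (2 * x) * (g s * θ s)).intervalIntegrable 0 t)
        (cgθ2.intervalIntegrable 0 t),
      intervalIntegral.integral_add
        (f := fun s => (r : ℝ) - x ^ 2 * g s) (g := fun s => (2 * x) * (g s * θ s))
        ((continuous_const.sub (continuous_const.mul hg) : Continuous fun s =>
          (r : ℝ) - x ^ 2 * g s).intervalIntegrable 0 t)
        ((continuous_const.mul cgθ : Continuous fun s =>
          (2 * x) * (g s * θ s)).intervalIntegrable 0 t),
      intervalIntegral.integral_sub (g := fun s => x ^ 2 * g s) intervalIntegrable_const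
        ((continuous_const.mul hg : Continuous fun s => x ^ 2 * g s).intervalIntegrable 0 t),
      intervalIntegral.integral_const, intervalIntegral.integral_const_mul,
      intervalIntegral.integral_const_mul]
    simp only [smul_eq_mul]
    ring
  -- fundamental theorem of calculus in time
  have hFTC : ∀ t x : ℝ, φ t x = φ 0 x + (∫ s in (0:ℝ)..t, (r - g s * (x - θ s) ^ 2))
      - t * ∫ s in (0:ℝ)..1, (r - g s * (x - θ s) ^ 2) := by
    intro t x
    have hcont : Continuous fun s => r - g s * (x - θ s) ^ 2 :=
      continuous_const.sub (hg.mul ((continuous_const.sub hθ).pow 2))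
    have h1 := intervalIntegral.integral_eq_sub_of_hasDerivAt (f := fun s => φ s x)
      (f' := fun s => (r - g s * (x - θ s) ^ 2) - ∫ s in (0:ℝ)..1, (r - g s * (x - θ s) ^ 2))
      (a := 0) (b := t) (fun s _ => hφt s x)
      ((hcont.sub continuous_const).intervalIntegrable 0 t)
    rw [intervalIntegral.integral_sub (hcont.intervalIntegrable 0 t) intervalIntegrable_const,
      intervalIntegral.integral_const] at h1
    simp only [smul_eq_mul, sub_zero] at h1
    linarith [h1]
  -- differentiability of φ 0 in x
  have hd0 : DifferentiableAt ℝ (fun y => φ 0 y) xb := by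
    have h : ContDiff ℝ (⊤ : ℕ∞) (fun y : ℝ => φ 0 y) :=
      hφsmooth.comp (contDiff_const.prodMk contDiff_id)
    exact (h.differentiable (by simp)).differentiableAt
  -- the key derivative computation
  have key : ∀ t : ℝ, deriv (fun y => φ t y) xb
      = deriv (fun y => φ 0 y) xb
        + (2 * t * (∫ s in (0:ℝ)..1, g s * (xb - θ s))
          - 2 * ∫ s in (0:ℝ)..t, g s * (xb - θ s)) := by
    intro t
    have hfun : (fun y => φ t y) = fun y => φ 0 y +
        ((r * t - y ^ 2 * (∫ s in (0:ℝ)..t, g s) + 2 * y * (∫ s in (0:ℝ)..t, g s * θ s)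
          - ∫ s in (0:ℝ)..t, g s * θ s ^ 2)
        - t * (r * 1 - y ^ 2 * (∫ s in (0:ℝ)..1, g s) + 2 * y * (∫ s in (0:ℝ)..1, g s * θ s)
          - ∫ s in (0:ℝ)..1, g s * θ s ^ 2)) := by
      funext y
      rw [hFTC t y, hA t y, hA 1 y]
      ring
    have h1 : HasDerivAt (fun y => φ 0 y) (deriv (fun y => φ 0 y) xb) xb := hd0.hasDerivAt
    have hpow : HasDerivAt (fun y : ℝ => y ^ 2) (2 * xb) xb := by
      simpa using hasDerivAt_pow 2 xb
    have hid : HasDerivAt (fun y : ℝ => y) 1 xb := hasDerivAt_id xb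
    have h2 := ((((hasDerivAt_const xb (r * t)).sub
        (hpow.mul_const (∫ s in (0:ℝ)..t, g s))).add
        ((hid.const_mul (2:ℝ)).mul_const (∫ s in (0:ℝ)..t, g s * θ s))).sub
        (hasDerivAt_const xb (∫ s in (0:ℝ)..t, g s * θ s ^ 2))).sub
      (HasDerivAt.const_mul t ((((hasDerivAt_const xb (r * 1)).sub
        (hpow.mul_const (∫ s in (0:ℝ)..1, g s))).add
        ((hid.const_mul (2:ℝ)).mul_const (∫ s in (0:ℝ)..1, g s * θ s))).sub
        (hasDerivAt_const xb (∫ s in (0:ℝ)..1, g s * θ s ^ 2))))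
    have h3 := (h1.add h2).deriv
    calc deriv (fun y => φ t y) xb
        = deriv (fun y => φ 0 y) xb
          + ((0 - 2 * xb * (∫ s in (0:ℝ)..t, g s) + 2 * 1 * (∫ s in (0:ℝ)..t, g s * θ s) - 0)
            - t * (0 - 2 * xb * (∫ s in (0:ℝ)..1, g s)
              + 2 * 1 * (∫ s in (0:ℝ)..1, g s * θ s) - 0)) := by
          rw [hfun]; exact h3
      _ = _ := by rw [hGlin t, hGlin 1]; ring
  -- value of G(1)
  have hGone : (∫ s in (0:ℝ)..1, g s * (xb - θ s)) = -(c * Real.sqrt gbar) / 2 := by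
    rw [hGlin 1, ← hgbar, ← hg₁, hxb, hxm]
    have hbne : gbar ≠ 0 := ne_of_gt hgbar_pos
    have hsne : Real.sqrt gbar ≠ 0 := ne_of_gt hsqpos
    field_simp
    linear_combination c * hsq
  -- use the constraint to identify deriv (φ 0) xb
  have hc := hconstraint xb
  have e1 : (∫ t in (0:ℝ)..1, deriv (fun y => φ t y) xb)
      = ∫ t in (0:ℝ)..1, (deriv (fun y => φ 0 y) xb
        + (2 * t * (∫ s in (0:ℝ)..1, g s * (xb - θ s))
          - 2 * ∫ s in (0:ℝ)..t, g s * (xb - θ s))) :=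
    intervalIntegral.integral_congr (fun t _ => key t)
  have hd0val : deriv (fun y => φ 0 y) xb
      = 2 * (∫ τ in (0:ℝ)..1, ∫ s in (0:ℝ)..τ, g s * (xb - θ s))
        - (∫ s in (0:ℝ)..1, g s * (xb - θ s)) := by
    have cpoly : Continuous fun t : ℝ => 2 * t * (∫ s in (0:ℝ)..1, g s * (xb - θ s)) :=
      (continuous_const.mul continuous_id).mul continuous_const
    have crest : Continuous fun t : ℝ => 2 * t * (∫ s in (0:ℝ)..1, g s * (xb - θ s))
        - 2 * ∫ s in (0:ℝ)..t, g s * (xb - θ s) :=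
      cpoly.sub (continuous_const.mul hprim)
    rw [intervalIntegral.integral_add intervalIntegrable_const (crest.intervalIntegrable 0 1),
      intervalIntegral.integral_const,
      intervalIntegral.integral_sub
        (g := fun t => 2 * ∫ s in (0:ℝ)..t, g s * (xb - θ s))
        (cpoly.intervalIntegrable 0 1)
        ((continuous_const.mul hprim : Continuous fun t =>
          2 * ∫ s in (0:ℝ)..t, g s * (xb - θ s)).intervalIntegrable 0 1),
      intervalIntegral.integral_const_mul] at e1
    have e2 : (∫ t in (0:ℝ)..1, 2 * t * (∫ s in (0:ℝ)..1, g s * (xb - θ s)))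
        = (∫ s in (0:ℝ)..1, g s * (xb - θ s)) := by
      rw [intervalIntegral.integral_congr
        (g := fun t => (2 * (∫ s in (0:ℝ)..1, g s * (xb - θ s))) * t) (fun t _ => by ring),
        intervalIntegral.integral_const_mul, integral_id]
      ring
    rw [e2] at e1
    rw [e1] at hc
    simp only [smul_eq_mul, sub_zero] at hc
    linarith [hc]
  refine ⟨?_, ?_, ?_⟩
  · intro t _
    rw [key t, hd0val, hD t, hGone]
    ring
  · rw [hD 0, hD 1, intervalIntegral.integral_same, hGone]
    ring
  · have e3 : (∫ t in (0:ℝ)..1, D t)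
        = ∫ t in (0:ℝ)..1, (-c * Real.sqrt gbar * (t - 1 / 2)
          + 2 * (∫ τ in (0:ℝ)..1, ∫ s in (0:ℝ)..τ, g s * (xb - θ s))
          - 2 * ∫ s in (0:ℝ)..t, g s * (xb - θ s)) :=
      intervalIntegral.integral_congr (fun t _ => hD t)
    rw [e3]
    have c1 : Continuous fun t : ℝ => -c * Real.sqrt gbar * (t - 1 / 2) :=
      continuous_const.mul (continuous_id.sub continuous_const)
    rw [intervalIntegral.integral_sub
      (f := fun t => -c * Real.sqrt gbar * (t - 1 / 2)
        + 2 * (∫ τ in (0:ℝ)..1, ∫ s in (0:ℝ)..τ, g s * (xb - θ s)))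
      (g := fun t => 2 * ∫ s in (0:ℝ)..t, g s * (xb - θ s))
      ((c1.add continuous_const : Continuous fun t => -c * Real.sqrt gbar * (t - 1 / 2)
        + 2 * (∫ τ in (0:ℝ)..1, ∫ s in (0:ℝ)..τ, g s * (xb - θ s))).intervalIntegrable 0 1)
      ((continuous_const.mul hprim : Continuous fun t =>
        2 * ∫ s in (0:ℝ)..t, g s * (xb - θ s)).intervalIntegrable 0 1),
      intervalIntegral.integral_add (c1.intervalIntegrable 0 1) intervalIntegrable_const,
      intervalIntegral.integral_const, intervalIntegral.integral_const_mul,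
      intervalIntegral.integral_const_mul,
      intervalIntegral.integral_sub (intervalIntegrable_id) intervalIntegrable_const,
      integral_id, intervalIntegral.integral_const]
    simp only [smul_eq_mul]
    norm_num
end
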